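/- (Dual recursion, degree 1.) For all x, y ∈ ℝ², R1(β(x))·ψ1(y) = (1 − x·y)·𝟙, where 𝟙 ∈ ℝ^{12} is the all-ones vector and x·y is the Euclidean inner product. -/

import Mathlib

/-- Euclidean inner product on `ℝ²`. -/
def dotR2 (x y : ℝ × ℝ) : ℝ := x.1 * y.1 + x.2 * y.2

/-- The linear polynomial `c_p(y) = 1 − p·y` attached to a point `p`. -/
noncomputable def cpl (p y : ℝ × ℝ) : ℝ := 1 - dotR2 p y

/-- The 12×10 recursion matrix `R1` (with `γj = 2 βj − c`; the paper's `R1` is `c = 1`,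
the derivative matrix `U1` is `c = 0`). -/
noncomputable def R1g (b1 b2 b3 c : ℝ) : Matrix (Fin 12) (Fin 10) ℝ :=
  !![2*b1 - c, 0, 0, 0, 0, 2*(b3 - b2), 4*b2, 0, 0, 0;
     2*b1 - c, 0, 0, 2*(b2 - b3), 0, 0, 4*b3, 0, 0, 0;
     0, 2*b2 - c, 0, 2*(b1 - b3), 0, 0, 0, 4*b3, 0, 0;
     0, 2*b2 - c, 0, 0, 2*(b3 - b1), 0, 0, 4*b1, 0, 0;
     0, 0, 2*b3 - c, 0, 2*(b2 - b1), 0, 0, 0, 4*b1, 0;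
     0, 0, 2*b3 - c, 0, 0, 2*(b1 - b2), 0, 0, 4*b2, 0;
     0, 0, 0, 0, 0, 2*(b3 - b2), 4*(b1 - b3), 0, 0, -3*(2*b1 - c);
     0, 0, 0, 2*(b2 - b3), 0, 0, 4*(b1 - b2), 0, 0, -3*(2*b1 - c);
     0, 0, 0, 2*(b1 - b3), 0, 0, 0, 4*(b2 - b1), 0, -3*(2*b2 - c);
     0, 0, 0, 0, 2*(b3 - b1), 0, 0, 4*(b2 - b3), 0, -3*(2*b2 - c);
     0, 0, 0, 0, 2*(b2 - b1), 0, 0, 0, 4*(b3 - b2), -3*(2*b3 - c);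
     0, 0, 0, 0, 0, 2*(b1 - b2), 0, 0, 4*(b3 - b1), -3*(2*b3 - c)]

/-- The 10×12 recursion matrix `R2` (with `γj = 2 βj − c`). -/
noncomputable def R2g (b1 b2 b3 c : ℝ) : Matrix (Fin 10) (Fin 12) ℝ :=
  !![2*b1 - c, 2*b2, 0, 0, 0, 0, 0, 0, 0, 0, 0, 2*b3;
     0, 0, 0, 2*b1, 2*b2 - c, 2*b3, 0, 0, 0, 0, 0, 0;
     0, 0, 0, 0, 0, 0, 0, 2*b2, 2*b3 - c, 2*b1, 0, 0;
     0, b1 - b3, 3*b3, b2 - b3, 0, 0, 0, 0, 0, 0, 0, 0;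
     0, 0, 0, 0, 0, b2 - b1, 3*b1, b3 - b1, 0, 0, 0, 0;
     0, 0, 0, 0, 0, 0, 0, 0, 0, b3 - b2, 3*b2, b1 - b2;
     0, (b1 - b3)/2, 3*b2/2, 0, 0, 0, 0, 0, 0, 0, 3*b3/2, (b1 - b2)/2;
     0, 0, 3*b1/2, (b2 - b3)/2, 0, (b2 - b1)/2, 3*b3/2, 0, 0, 0, 0, 0;
     0, 0, 0, 0, 0, 0, 3*b2/2, (b3 - b1)/2, 0, (b3 - b2)/2, 3*b1/2, 0;
     0, 0, -(2*b3 - c), 0, 0, 0, -(2*b1 - c), 0, 0, 0, -(2*b2 - c), 0]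

/-- The 12×16 recursion matrix `R3` (with `γj = 2 βj − c`). -/
noncomputable def R3g (b1 b2 b3 c : ℝ) : Matrix (Fin 12) (Fin 16) ℝ :=
  !![2*b1 - c, 2*b2, 0, 0, 0, 0, 0, 0, 0, 0, 0, 2*b3, 0, 0, 0, 0;
     0, b1 - b3, b2, 0, 0, 0, 0, 0, 0, 0, 0, 0, 2*b3, 0, 0, 0;
     0, 0, (b1 + b2)/3, 0, 0, 0, b3/3, 0, 0, 0, b3/3, 0, 2*b1/3, 2*b2/3, 0, b3/3;
     0, 0, b1, b2 - b3, 0, 0, 0, 0, 0, 0, 0, 0, 0, 2*b3, 0, 0;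
     0, 0, 0, 2*b1, 2*b2 - c, 2*b3, 0, 0, 0, 0, 0, 0, 0, 0, 0, 0;
     0, 0, 0, 0, 0, b2 - b1, b3, 0, 0, 0, 0, 0, 0, 2*b1, 0, 0;
     0, 0, b1/3, 0, 0, 0, (b2 + b3)/3, 0, 0, 0, b1/3, 0, 0, 2*b2/3, 2*b3/3, b1/3;
     0, 0, 0, 0, 0, 0, b2, b3 - b1, 0, 0, 0, 0, 0, 0, 2*b1, 0;
     0, 0, 0, 0, 0, 0, 0, 2*b2, 2*b3 - c, 2*b1, 0, 0, 0, 0, 0, 0;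
     0, 0, 0, 0, 0, 0, 0, 0, 0, b3 - b2, b1, 0, 0, 0, 2*b2, 0;
     0, 0, b2/3, 0, 0, 0, b2/3, 0, 0, 0, (b1 + b3)/3, 0, 2*b1/3, 0, 2*b3/3, b2/3;
     0, 0, 0, 0, 0, 0, 0, 0, 0, 0, b3, b1 - b2, 2*b2, 0, 0, 0]

/-- The recursion matrix `R1(β)`. -/
noncomputable def R1 (b1 b2 b3 : ℝ) : Matrix (Fin 12) (Fin 10) ℝ := R1g b1 b2 b3 1
/-- The recursion matrix `R2(β)`. -/
noncomputable def R2 (b1 b2 b3 : ℝ) : Matrix (Fin 10) (Fin 12) ℝ := R2g b1 b2 b3 1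
/-- The recursion matrix `R3(β)`. -/
noncomputable def R3 (b1 b2 b3 : ℝ) : Matrix (Fin 12) (Fin 16) ℝ := R3g b1 b2 b3 1

/-! Since `c_p(y) = 1 − p·y` is affine in `p`, each `c_j` with `j ≥ 4` is the corresponding
average of `c1, c2, c3`. On such vectors every row of `R1(β)` evaluates to `β1 c1 + β2 c2 + β3 c3`
when `β1 + β2 + β3 = 1`, and by affinity again this is `c_x(y) = 1 − x·y`. -/

lemma cpl_midpoint (p q y : ℝ × ℝ) :
    cpl ((2⁻¹ : ℝ) • (p + q)) y = (cpl p y + cpl q y) / 2 := by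
  simp only [cpl, dotR2, Prod.smul_fst, Prod.smul_snd, Prod.fst_add, Prod.snd_add, smul_eq_mul]
  ring

lemma cpl_centroid (p q r y : ℝ × ℝ) :
    cpl ((3⁻¹ : ℝ) • (p + q + r)) y = (cpl p y + cpl q y + cpl r y) / 3 := by
  simp only [cpl, dotR2, Prod.smul_fst, Prod.smul_snd, Prod.fst_add, Prod.snd_add, smul_eq_mul]
  ring

lemma cpl_barycentric {b1 b2 b3 : ℝ} (hb : b1 + b2 + b3 = 1) (p1 p2 p3 y : ℝ × ℝ) :
    cpl (b1 • p1 + b2 • p2 + b3 • p3) y = b1 * cpl p1 y + b2 * cpl p2 y + b3 * cpl p3 y := by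
  simp only [cpl, dotR2, Prod.smul_fst, Prod.smul_snd, Prod.fst_add, Prod.snd_add, smul_eq_mul]
  linear_combination -hb

lemma R1_mulVec_of_powellSabin {b1 b2 b3 : ℝ} (hb : b1 + b2 + b3 = 1)
    {c1 c2 c3 c4 c5 c6 c7 c8 c9 c10 : ℝ}
    (h4 : c4 = (c1 + c2) / 2) (h5 : c5 = (c2 + c3) / 2) (h6 : c6 = (c3 + c1) / 2)
    (h7 : c7 = (c4 + c6) / 2) (h8 : c8 = (c4 + c5) / 2) (h9 : c9 = (c5 + c6) / 2)
    (h10 : c10 = (c1 + c2 + c3) / 3) :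
    (R1 b1 b2 b3).mulVec ![c1, c2, c3, c4, c5, c6, c7, c8, c9, c10] =
      fun _ => b1 * c1 + b2 * c2 + b3 * c3 := by
  obtain rfl : b3 = 1 - b1 - b2 := by linarith
  subst h7 h8 h9 h4 h5 h6 h10
  funext i
  revert i
  simp only [R1, R1g, Matrix.cons_mulVec, Matrix.empty_mulVec, Matrix.cons_dotProduct,
    Matrix.dotProduct_of_isEmpty, Matrix.cons_val_zero, Matrix.cons_val_succ, Matrix.head_cons,
    Matrix.tail_cons, Fin.forall_fin_succ, IsEmpty.forall_iff, and_true]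
  and_intros <;> ring

theorem dual_recursion_deg1_general
    (p1 p2 p3 : ℝ × ℝ)
    (p4 p5 p6 p7 p8 p9 p10 : ℝ × ℝ)
    (h4 : p4 = (2⁻¹ : ℝ) • (p1 + p2))
    (h5 : p5 = (2⁻¹ : ℝ) • (p2 + p3))
    (h6 : p6 = (2⁻¹ : ℝ) • (p3 + p1))
    (h7 : p7 = (2⁻¹ : ℝ) • (p4 + p6))
    (h8 : p8 = (2⁻¹ : ℝ) • (p4 + p5))
    (h9 : p9 = (2⁻¹ : ℝ) • (p5 + p6))
    (h10 : p10 = (3⁻¹ : ℝ) • (p1 + p2 + p3))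
    (x y : ℝ × ℝ) (b1 b2 b3 : ℝ)
    (hx : x = b1 • p1 + b2 • p2 + b3 • p3)
    (hb : b1 + b2 + b3 = 1) :
    (R1 b1 b2 b3).mulVec
      ![cpl p1 y, cpl p2 y, cpl p3 y, cpl p4 y, cpl p5 y,
        cpl p6 y, cpl p7 y, cpl p8 y, cpl p9 y, cpl p10 y] =
      fun _ : Fin 12 => 1 - dotR2 x y := by
  have hcx : 1 - dotR2 x y = cpl x y := rfl
  rw [hcx, hx, cpl_barycentric hb]
  subst h4 h5 h6 h7 h8 h9 h10
  exact R1_mulVec_of_powellSabin hb (cpl_midpoint ..) (cpl_midpoint ..) (cpl_midpoint ..)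
    (cpl_midpoint ..) (cpl_midpoint ..) (cpl_midpoint ..) (cpl_centroid ..)

/-- dual recursion, degree 1: `R1(β(x)) ψ1(y) = (1 − x·y) 𝟙`. -/
theorem dual_recursion_deg1
    (p1 p2 p3 : ℝ × ℝ)
    (hind : AffineIndependent ℝ ![p1, p2, p3])
    (p4 p5 p6 p7 p8 p9 p10 : ℝ × ℝ)
    (h4 : p4 = (2⁻¹ : ℝ) • (p1 + p2))
    (h5 : p5 = (2⁻¹ : ℝ) • (p2 + p3))
    (h6 : p6 = (2⁻¹ : ℝ) • (p3 + p1))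
    (h7 : p7 = (2⁻¹ : ℝ) • (p4 + p6))
    (h8 : p8 = (2⁻¹ : ℝ) • (p4 + p5))
    (h9 : p9 = (2⁻¹ : ℝ) • (p5 + p6))
    (h10 : p10 = (3⁻¹ : ℝ) • (p1 + p2 + p3))
    (x y : ℝ × ℝ) (b1 b2 b3 : ℝ)
    (hx : x = b1 • p1 + b2 • p2 + b3 • p3)
    (hb : b1 + b2 + b3 = 1) :
    (R1 b1 b2 b3).mulVec
      ![cpl p1 y, cpl p2 y, cpl p3 y, cpl p4 y, cpl p5 y,
        cpl p6 y, cpl p7 y, cpl p8 y, cpl p9 y, cpl p10 y] =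
      fun _ : Fin 12 => 1 - dotR2 x y :=
  dual_recursion_deg1_general p1 p2 p3 p4 p5 p6 p7 p8 p9 p10 h4 h5 h6 h7 h8 h9 h10 x y b1 b2 b3 hx
    hb
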